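/- arXiv:1602.00639 — 5 statements merged into one kernel-verified Lean document; each statement's English description precedes it below -/
import Mathlib

section
/- Let r, b > 0 and let the switch time t_j have density p'(t) = (r/b)·e^{(r/b)·t}/(e-1) on [0, b/r] (and zero elsewhere). For any depletion time u with 0 ≤ u < b/r, the expected algorithm cost ∫₀^u (r·t + b)·p'(t) dt + ∫_u^{b/r} r·u·p'(t) dt equals (e/(e-1))·r·u. -/
/-!
With `c = r / b`, the map `t ↦ r t e^{ct}` is an antiderivative of `(r t + b) c e^{ct}`, so the
buying part contributes `r u e^{cu} / (e - 1)`, while the renting part contributes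
`r u (e - e^{cu}) / (e - 1)` because `c · (b / r) = 1`. The `e^{cu}` terms cancel.
-/

open Real MeasureTheory intervalIntegral

/-- Density of the ROA switch time on `[0, b/r]`. -/
noncomputable def roaDensity (r b t : ℝ) : ℝ :=
  (r / b) * exp ((r / b) * t) / (exp 1 - 1)

theorem hasDerivAt_exp_const_mul (c t : ℝ) :
    HasDerivAt (fun t => exp (c * t)) (c * exp (c * t)) t := by
  simpa [mul_comm] using ((hasDerivAt_id t).const_mul c).exp

theorem integral_mul_exp_mul (c a v : ℝ) :
    ∫ t in a..v, c * exp (c * t) = exp (c * v) - exp (c * a) :=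
  integral_eq_sub_of_hasDerivAt (fun t _ => hasDerivAt_exp_const_mul c t)
    (Continuous.intervalIntegrable (by fun_prop) _ _)

theorem integral_linear_mul_mul_exp_mul {r b c : ℝ} (hrc : r = c * b) (a v : ℝ) :
    ∫ t in a..v, (r * t + b) * (c * exp (c * t)) = r * v * exp (c * v) - r * a * exp (c * a) := by
  refine integral_eq_sub_of_hasDerivAt (f := fun t => r * t * exp (c * t)) (fun t _ => ?_)
    (Continuous.intervalIntegrable (by fun_prop) _ _)
  refine (((hasDerivAt_id t).const_mul r).mul (hasDerivAt_exp_const_mul c t)).congr_deriv ?_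
  simp only [id, hrc]
  ring

theorem stmt_5_general (r b u : ℝ) (hr : 0 < r) (hb : 0 < b) :
    (∫ t in (0:ℝ)..u, (r * t + b) * roaDensity r b t) +
      (∫ t in u..(b / r), r * u * roaDensity r b t) =
    (exp 1 / (exp 1 - 1)) * (r * u) := by
  have he : exp 1 - 1 ≠ 0 := sub_ne_zero.mpr (one_lt_exp_iff.mpr one_pos).ne'
  have hrc : r = r / b * b := by field_simp
  have hend : r / b * (b / r) = 1 := by field_simp
  simp only [roaDensity, ← mul_div_assoc, intervalIntegral.integral_div]
  rw [integral_linear_mul_mul_exp_mul hrc, intervalIntegral.integral_const_mul (r * u),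
    integral_mul_exp_mul, hend]
  field_simp
  ring

theorem stmt_5 (r b u : ℝ) (hr : 0 < r) (hb : 0 < b) (hu0 : 0 ≤ u) (hu : u < b / r) :
    (∫ t in (0:ℝ)..u, (r * t + b) * roaDensity r b t) +
      (∫ t in u..(b / r), r * u * roaDensity r b t) =
    (exp 1 / (exp 1 - 1)) * (r * u) :=
  stmt_5_general r b u hr hb
end

section
/- Let r, b > 0 and T ≥ b/r. With switch time t_j distributed with CDF p_off(t) = (e^{(r/b)t} - 1)/(e-1) on [0, b/r], for every u ∈ (0, T] the expected cost of the randomized algorithm equals (e/(e-1))·min(r·u, b); hence the randomized online algorithm achieves (expected) competitive ratio e/(e-1). -/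
open Real MeasureTheory intervalIntegral

/-- Expected cost of the randomized algorithm when the depletion time is `u`:
the algorithm pays `r*u` if `u < t_j` and `r*t_j + b` if `u ≥ t_j`,
where `t_j` is drawn from the ROA density on `[0, b/r]`. -/
noncomputable def roaExpCost (r b u : ℝ) : ℝ :=
  ∫ t in (0:ℝ)..(b / r), (if u < t then r * u else r * t + b) * roaDensity r b t

/-!
Splitting the integral at `m = min u (b/r)`, the expected cost with density `p` is
`∫₀^m (r t + b) p(t) dt + r u ∫_m^{b/r} p(t) dt`. Both integrals are explicit, since
`r t e^{(r/b) t}` is a primitive of `(r t + b) e^{(r/b) t} (r/b)`. This gives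
`(r m e^{(r/b) m} + r u (e - e^{(r/b) m}))/(e - 1)`, which is `e r u/(e - 1)` when `m = u`
and `e b/(e - 1)` when `m = b/r`.
-/

theorem intervalIntegral.integral_ite_lt_eq {f g : ℝ → ℝ} {a c u : ℝ}
    (hf : IntervalIntegrable f volume a c) (hg : IntervalIntegrable g volume a c)
    (hau : a ≤ u) (hac : a ≤ c) :
    ∫ t in a..c, (if u < t then g t else f t)
      = (∫ t in a..min u c, f t) + ∫ t in min u c..c, g t := by
  have ham : a ≤ min u c := le_min hau hac
  have hmc : min u c ≤ c := min_le_right u c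
  have hf' : IntervalIntegrable f volume a (min u c) :=
    hf.mono_set (Set.uIcc_subset_uIcc_left (Set.mem_uIcc_of_le ham hmc))
  have hg' : IntervalIntegrable g volume (min u c) c :=
    hg.mono_set (Set.uIcc_subset_uIcc_right (Set.mem_uIcc_of_le ham hmc))
  have h_left : Set.EqOn (fun t => if u < t then g t else f t) f (Set.uIcc a (min u c)) := by
    intro t ht
    rw [Set.uIcc_of_le ham] at ht
    simp [not_lt.mpr (ht.2.trans (min_le_left u c))]
  have h_right : Set.EqOn (fun t => if u < t then g t else f t) g (Set.uIoc (min u c) c) := by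
    intro t ht
    rw [Set.uIoc_of_le hmc] at ht
    have hut : u < t := (min_lt_iff.mp ht.1).resolve_right (not_lt.mpr ht.2)
    simp [hut]
  rw [← integral_add_adjacent_intervals (hf'.congr (h_left.mono Set.uIoc_subset_uIcc).symm)
      (hg'.congr h_right.symm),
    integral_congr h_left,
    integral_congr_ae_restrict (ae_restrict_of_forall_mem measurableSet_uIoc h_right)]

theorem continuous_roaDensity (r b : ℝ) : Continuous (roaDensity r b) := by
  unfold roaDensity
  fun_prop

theorem hasDerivAt_roaCDF (r b t : ℝ) :
    HasDerivAt (fun t => exp (r / b * t) / (exp 1 - 1)) (roaDensity r b t) t := by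
  refine ((((hasDerivAt_id' t).const_mul (r / b)).exp).div_const (exp 1 - 1)).congr_deriv ?_
  rw [roaDensity]
  ring

theorem integral_roaDensity (r b x y : ℝ) :
    ∫ t in x..y, roaDensity r b t = (exp (r / b * y) - exp (r / b * x)) / (exp 1 - 1) := by
  rw [integral_eq_sub_of_hasDerivAt (fun t _ => hasDerivAt_roaCDF r b t)
    ((continuous_roaDensity r b).intervalIntegrable x y), sub_div]

theorem integral_switchCost_mul_roaDensity {b : ℝ} (hb : b ≠ 0) (r x y : ℝ) :
    ∫ t in x..y, (r * t + b) * roaDensity r b t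
      = (r * y * exp (r / b * y) - r * x * exp (r / b * x)) / (exp 1 - 1) := by
  have hderiv : ∀ t, HasDerivAt (fun t => r * t * (exp (r / b * t) / (exp 1 - 1)))
      ((r * t + b) * roaDensity r b t) t := by
    intro t
    refine (((hasDerivAt_id' t).const_mul r).mul (hasDerivAt_roaCDF r b t)).congr_deriv ?_
    rw [roaDensity]
    field_simp
    ring
  have hcont : Continuous fun t => (r * t + b) * roaDensity r b t := by
    have := continuous_roaDensity r b
    fun_prop
  rw [integral_eq_sub_of_hasDerivAt (fun t _ => hderiv t) (hcont.intervalIntegrable x y)]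
  ring

theorem roaExpCost_eq_of_nonneg {r b u : ℝ} (hr : 0 < r) (hb : 0 < b) (hu : 0 ≤ u) :
    roaExpCost r b u
      = (r * min u (b / r) * exp (r / b * min u (b / r))
          + r * u * (exp 1 - exp (r / b * min u (b / r)))) / (exp 1 - 1) := by
  have hcont : Continuous fun t => (r * t + b) * roaDensity r b t := by
    have := continuous_roaDensity r b
    fun_prop
  have hcont' : Continuous fun t => r * u * roaDensity r b t :=
    continuous_const.mul (continuous_roaDensity r b)
  have hend : r / b * (b / r) = 1 := by field_simp
  simp only [roaExpCost, ite_mul]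
  rw [integral_ite_lt_eq (hcont.intervalIntegrable _ _) (hcont'.intervalIntegrable _ _) hu
      (by positivity), integral_switchCost_mul_roaDensity hb.ne',
    intervalIntegral.integral_const_mul,
    integral_roaDensity, hend]
  ring

theorem stmt_7_general (r b T : ℝ) (hr : 0 < r) (hb : 0 < b) :
    ∀ u : ℝ, 0 < u → u ≤ T →
      roaExpCost r b u = (exp 1 / (exp 1 - 1)) * min (r * u) b := by
  intro u hu _
  have he : exp 1 - 1 ≠ 0 := (sub_pos.mpr (one_lt_exp_iff.mpr one_pos)).ne'
  rw [roaExpCost_eq_of_nonneg hr hb hu.le]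
  rcases le_total u (b / r) with hub | hbu
  · have hrub : r * u ≤ b := (le_div_iff₀' hr).mp hub
    rw [min_eq_left hub, min_eq_left hrub]
    field_simp
    ring
  · have hbru : b ≤ r * u := (div_le_iff₀' hr).mp hbu
    have hend : r / b * (b / r) = 1 := by field_simp
    rw [min_eq_right hbu, min_eq_right hbru, hend, mul_div_cancel₀ _ hr.ne']
    field_simp
    ring

theorem stmt_7 (r b T : ℝ) (hr : 0 < r) (hb : 0 < b) (hT : b / r ≤ T) :
    ∀ u : ℝ, 0 < u → u ≤ T →
      roaExpCost r b u = (exp 1 / (exp 1 - 1)) * min (r * u) b :=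
  stmt_7_general r b T hr hb
end

section
/- Let (r_v) be a strictly decreasing finite positive sequence r_1 > r_2 > ... > r_n > 0, let 0 = t_0 < t_1 < ... < t_{n-1} be change times, and b > 0. Define for each v ≥ 1 the threshold t̄_v = b/r_v - (1/r_v)·Σ_{v'=1}^{v-1} t_{v'}·(r_{v'} - r_{v'+1}). If t̄_{v-1} > t_{v-1} (the old threshold has not yet been reached), then t̄_v > t̄_{v-1}, i.e., the updated OFF time strictly increases. -/
/-!
Writing `S_v` for the sum in `t̄_v`, we have `r_v t̄_v = b - S_v` and
`S_{v+1} = S_v + t_v (r_v - r_{v+1})`, which combine to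
`r_{v+1} (t̄_{v+1} - t̄_v) = (r_v - r_{v+1}) (t̄_v - t_v)`.
Both factors on the right are positive when the rent drops and `t_v < t̄_v`.
-/

/-- The threshold (OFF time) of the online algorithm at phase `v`:
`t̄_v = b/r_v - (1/r_v) Σ_{v'=1}^{v-1} t_{v'} (r_{v'} - r_{v'+1})`. -/
noncomputable def offThreshold (r t : ℕ → ℝ) (b : ℝ) (v : ℕ) : ℝ :=
  b / r v - (1 / r v) * ∑ v' ∈ Finset.Icc 1 (v - 1), t v' * (r v' - r (v' + 1))

theorem Finset.sum_Icc_one_succ_sub_one {M : Type*} [AddCommMonoid M] (f : ℕ → M) {v : ℕ}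
    (hv : 1 ≤ v) : ∑ i ∈ Finset.Icc 1 (v + 1 - 1), f i = ∑ i ∈ Finset.Icc 1 (v - 1), f i + f v := by
  obtain ⟨w, rfl⟩ : ∃ w, v = w + 1 := ⟨v - 1, by omega⟩
  exact Finset.sum_Icc_succ_top (by omega) f

section OffThreshold

variable (r t : ℕ → ℝ) (b : ℝ) {v : ℕ}

theorem mul_offThreshold (hv : r v ≠ 0) :
    r v * offThreshold r t b v =
      b - ∑ v' ∈ Finset.Icc 1 (v - 1), t v' * (r v' - r (v' + 1)) := by
  unfold offThreshold
  field_simp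

theorem mul_offThreshold_succ_sub (hv : 1 ≤ v) (hr : r v ≠ 0) (hr' : r (v + 1) ≠ 0) :
    r (v + 1) * (offThreshold r t b (v + 1) - offThreshold r t b v) =
      (r v - r (v + 1)) * (offThreshold r t b v - t v) := by
  have hcur := mul_offThreshold r t b hr
  have hnext := mul_offThreshold r t b hr'
  rw [Finset.sum_Icc_one_succ_sub_one _ hv] at hnext
  linear_combination hnext - hcur

theorem offThreshold_lt_succ (hv : 1 ≤ v) (hr : 0 < r (v + 1)) (hdec : r (v + 1) < r v)
    (hold : t v < offThreshold r t b v) :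
    offThreshold r t b v < offThreshold r t b (v + 1) := by
  have key := mul_offThreshold_succ_sub r t b hv (hr.trans hdec).ne' hr.ne'
  have hpos : 0 < r (v + 1) * (offThreshold r t b (v + 1) - offThreshold r t b v) := by
    rw [key]
    exact mul_pos (sub_pos.2 hdec) (sub_pos.2 hold)
  exact sub_pos.1 (pos_of_mul_pos_right hpos hr.le)

end OffThreshold

theorem stmt_10_general (n : ℕ) (r t : ℕ → ℝ) (b : ℝ)
    (hrpos : ∀ i, 1 ≤ i → i ≤ n → 0 < r i)
    (hrdec : ∀ i, 1 ≤ i → i < n → r (i + 1) < r i)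
    (v : ℕ) (hv2 : 2 ≤ v) (hvn : v ≤ n)
    (hold : t (v - 1) < offThreshold r t b (v - 1)) :
    offThreshold r t b (v - 1) < offThreshold r t b v := by
  obtain ⟨w, rfl⟩ : ∃ w, v = w + 1 := ⟨v - 1, by omega⟩
  exact offThreshold_lt_succ r t b (by omega) (hrpos _ (by omega) hvn)
    (hrdec _ (by omega) (by omega)) hold

theorem stmt_10 (n : ℕ) (r t : ℕ → ℝ) (b : ℝ) (hb : 0 < b)
    (hrpos : ∀ i, 1 ≤ i → i ≤ n → 0 < r i)
    (hrdec : ∀ i, 1 ≤ i → i < n → r (i + 1) < r i)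
    (ht0 : t 0 = 0)
    (htinc : ∀ i, i + 1 ≤ n - 1 → t i < t (i + 1))
    (v : ℕ) (hv2 : 2 ≤ v) (hvn : v ≤ n)
    (hold : t (v - 1) < offThreshold r t b (v - 1)) :
    offThreshold r t b (v - 1) < offThreshold r t b v :=
  stmt_10_general n r t b hrpos hrdec v hv2 hvn hold
end

section
/- Consider the online algorithm with decreasing piecewise-constant rental cost r(t) (values r_1 > ... > r_n) and buy cost b, which buys at the threshold time t̄ defined so the accumulated rental cost at t̄ equals b. If the depletion time u satisfies u ≥ t̄, then the algorithm's total cost equals (accumulated rental cost up to t̄) + b = 2b, while the offline optimal cost is b; hence the ratio is 2. If t_{v-1} ≤ u < t̄, the algorithm's cost equals the offline optimal cost (accumulated rental up to u). Therefore the algorithm is 2-competitive. -/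
open MeasureTheory intervalIntegral

/-- The piecewise-constant rental rate: at time `τ` its value is `r v` where
`v - 1` is the number of change times `t 1, ..., t (n-1)` that have already occurred,
i.e. `r τ = r v` on `[t (v-1), t v)`. -/
noncomputable def stepRate (n : ℕ) (r t : ℕ → ℝ) (τ : ℝ) : ℝ :=
  r (1 + ((Finset.Ico 1 n).filter (fun i => t i ≤ τ)).card)

/-- Accumulated rental cost up to time `s`: `∫₀^s r(τ) dτ`. -/
noncomputable def accRent (n : ℕ) (r t : ℕ → ℝ) (s : ℝ) : ℝ :=
  ∫ τ in (0:ℝ)..s, stepRate n r t τ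

/-- Cost of the online algorithm that buys at the threshold time `tbar`. -/
noncomputable def algCost (n : ℕ) (r t : ℕ → ℝ) (b tbar u : ℝ) : ℝ :=
  if u < tbar then accRent n r t u else accRent n r t tbar + b

/-!
The rental rate is positive, so the accumulated rent is monotone in time. Since it equals `b`
at `tbar`, it is at least `b` from `tbar` on and at most `b` before, which gives both cost
identities; the ratio bound follows because the offline cost `min (accRent u) b` is nonnegative.
-/

lemma card_filter_Ico_one_le (n : ℕ) (p : ℕ → Prop) [DecidablePred p] :
    ((Finset.Ico 1 n).filter p).card ≤ n - 1 :=
  (Finset.card_filter_le _ p).trans_eq (Nat.card_Ico 1 n)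

lemma stepRate_pos {n : ℕ} (hn : 1 ≤ n) {r : ℕ → ℝ} (hrpos : ∀ i, 1 ≤ i → i ≤ n → 0 < r i)
    (t : ℕ → ℝ) (τ : ℝ) : 0 < stepRate n r t τ := by
  refine hrpos _ (Nat.le_add_right 1 _) ?_
  have := card_filter_Ico_one_le n (fun i => t i ≤ τ)
  omega

lemma measurable_stepRate (n : ℕ) (r t : ℕ → ℝ) : Measurable (stepRate n r t) := by
  have hcount : Monotone fun τ : ℝ => ((Finset.Ico 1 n).filter (fun i => t i ≤ τ)).card :=
    fun _ _ hστ => Finset.card_le_card <| Finset.monotone_filter_right _ fun _ _ hi => hi.trans hστ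
  exact (measurable_from_top (f := fun k : ℕ => r (1 + k))).comp hcount.measurable

lemma abs_stepRate_le (n : ℕ) (r t : ℕ → ℝ) (τ : ℝ) :
    |stepRate n r t τ| ≤ ∑ k ∈ Finset.range (n + 1), |r (1 + k)| := by
  refine Finset.single_le_sum (f := fun k => |r (1 + k)|) (fun _ _ => abs_nonneg _) ?_
  have := card_filter_Ico_one_le n (fun i => t i ≤ τ)
  rw [Finset.mem_range]
  omega

lemma intervalIntegrable_stepRate (n : ℕ) (r t : ℕ → ℝ) (a c : ℝ) :
    IntervalIntegrable (stepRate n r t) volume a c :=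
  intervalIntegrable_const.mono_fun' (measurable_stepRate n r t).aestronglyMeasurable
    (Filter.Eventually.of_forall (abs_stepRate_le n r t))

lemma accRent_mono {n : ℕ} (hn : 1 ≤ n) {r : ℕ → ℝ} (hrpos : ∀ i, 1 ≤ i → i ≤ n → 0 < r i)
    (t : ℕ → ℝ) : Monotone (accRent n r t) := by
  intro a c hac
  rw [accRent, accRent, ← integral_add_adjacent_intervals (intervalIntegrable_stepRate n r t 0 a)
    (intervalIntegrable_stepRate n r t a c), le_add_iff_nonneg_right]
  exact integral_nonneg hac fun τ _ => (stepRate_pos hn hrpos t τ).le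

lemma accRent_zero (n : ℕ) (r t : ℕ → ℝ) : accRent n r t 0 = 0 :=
  integral_same

theorem stmt_12_general (n : ℕ) (hn : 1 ≤ n) (r t : ℕ → ℝ) (b : ℝ) (hb : 0 < b)
    (hrpos : ∀ i, 1 ≤ i → i ≤ n → 0 < r i)
    (tbar : ℝ)
    (hbal : accRent n r t tbar = b) :
    (∀ u : ℝ, tbar ≤ u →
        algCost n r t b tbar u = 2 * b ∧ min (accRent n r t u) b = b) ∧
    (∀ u : ℝ, 0 ≤ u → u < tbar →
        algCost n r t b tbar u = min (accRent n r t u) b) ∧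
    (∀ u : ℝ, 0 ≤ u → algCost n r t b tbar u ≤ 2 * min (accRent n r t u) b) := by
  have hmono := accRent_mono hn hrpos t
  have late (u : ℝ) (hu : tbar ≤ u) :
      algCost n r t b tbar u = 2 * b ∧ min (accRent n r t u) b = b :=
    ⟨by rw [algCost, if_neg hu.not_gt, hbal, two_mul], min_eq_right (hbal ▸ hmono hu)⟩
  have early (u : ℝ) (hu : u < tbar) : algCost n r t b tbar u = min (accRent n r t u) b := by
    rw [algCost, if_pos hu, min_eq_left (hbal ▸ hmono hu.le)]
  refine ⟨late, fun u _ => early u, fun u hu0 => ?_⟩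
  rcases lt_or_ge u tbar with hu | hu
  · have hrent : 0 ≤ accRent n r t u := accRent_zero n r t ▸ hmono hu0
    rw [early u hu]
    linarith [le_min hrent hb.le]
  · rw [(late u hu).1, (late u hu).2]

theorem stmt_12 (n : ℕ) (hn : 1 ≤ n) (r t : ℕ → ℝ) (b : ℝ) (hb : 0 < b)
    (hrpos : ∀ i, 1 ≤ i → i ≤ n → 0 < r i)
    (hrdec : ∀ i, 1 ≤ i → i < n → r (i + 1) < r i)
    (ht0 : t 0 = 0)
    (htinc : ∀ i, i + 1 ≤ n - 1 → t i < t (i + 1))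
    (tbar : ℝ) (htbar0 : 0 ≤ tbar)
    (hbal : accRent n r t tbar = b) :
    (∀ u : ℝ, tbar ≤ u →
        algCost n r t b tbar u = 2 * b ∧ min (accRent n r t u) b = b) ∧
    (∀ u : ℝ, 0 ≤ u → u < tbar →
        algCost n r t b tbar u = min (accRent n r t u) b) ∧
    (∀ u : ℝ, 0 ≤ u → algCost n r t b tbar u ≤ 2 * min (accRent n r t u) b) :=
  stmt_12_general n hn r t b hb hrpos tbar hbal
end

section
/- Let r, b > 0, κ ≥ 1, and suppose p: [0, b/r] → ℝ is differentiable, satisfies r·κ = r·p(t) - b·p'(t) for all t ∈ [0, b/r], p(0) = 1, and p(b/r) = 0. Then necessarily κ = e/(e-1) and p(t) = (e - e^{(r/b)t})/(e-1). -/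
/-!
The ODE reads `p' = (r/b)(p - κ)`; with the integrating factor `e^{-rt/b}` and `p(0) = 1` it gives
`p(t) = κ + (1 - κ) e^{rt/b}`. The condition `p(b/r) = 0` then reads `κ + (1 - κ) e = 0`, which
forces `κ = e/(e - 1)`.
-/

open Real

theorem eq_add_mul_exp_of_hasDerivAt_Icc {f : ℝ → ℝ} {a b c k : ℝ}
    (hf : ∀ t ∈ Set.Icc a b, HasDerivAt f (c * (f t - k)) t) :
    ∀ t ∈ Set.Icc a b, f t = k + (f a - k) * exp (c * (t - a)) := by
  set g : ℝ → ℝ := fun t => (f t - k) * exp (-(c * (t - a)))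
  have hg : ∀ t ∈ Set.Icc a b, HasDerivAt g 0 t := by
    intro t ht
    have he : HasDerivAt (fun t => exp (-(c * (t - a)))) (exp (-(c * (t - a))) * -(c * 1)) t :=
      (((hasDerivAt_id t).sub_const a).const_mul c).neg.exp
    exact (((hf t ht).sub_const k).mul he).congr_deriv (by ring)
  have hconst : ∀ t ∈ Set.Icc a b, g t = g a := constant_of_has_deriv_right_zero
    (fun t ht => (hg t ht).continuousAt.continuousWithinAt)
    (fun t ht => (hg t (Set.Ico_subset_Icc_self ht)).hasDerivWithinAt)
  intro t ht
  have hga := hconst t ht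
  simp only [g, sub_self, mul_zero, neg_zero, exp_zero, mul_one] at hga
  rw [← hga, mul_assoc, ← exp_add, neg_add_cancel, exp_zero, mul_one, add_sub_cancel]

theorem stmt_14_general (r b κ : ℝ) (hr : 0 < r) (hb : 0 < b)
    (p p' : ℝ → ℝ)
    (hderiv : ∀ t ∈ Set.Icc (0 : ℝ) (b / r), HasDerivAt p (p' t) t)
    (hode : ∀ t ∈ Set.Icc (0 : ℝ) (b / r), r * κ = r * p t - b * p' t)
    (h0 : p 0 = 1) (h1 : p (b / r) = 0) :
    κ = exp 1 / (exp 1 - 1) ∧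
    ∀ t ∈ Set.Icc (0 : ℝ) (b / r),
      p t = (exp 1 - exp ((r / b) * t)) / (exp 1 - 1) := by
  have hsol := eq_add_mul_exp_of_hasDerivAt_Icc (c := r / b) (k := κ) fun t ht =>
    (hderiv t ht).congr_deriv (by field_simp; linarith [hode t ht])
  simp only [h0, sub_zero] at hsol
  have he : exp 1 - 1 ≠ 0 := (sub_pos.2 (one_lt_exp_iff.2 one_pos)).ne'
  have hκ : κ = exp 1 / (exp 1 - 1) := by
    have hend := hsol (b / r) ⟨(div_pos hb hr).le, le_rfl⟩
    rw [h1, div_mul_div_cancel₀ hb.ne', div_self hr.ne'] at hend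
    field_simp
    linarith
  refine ⟨hκ, fun t ht => ?_⟩
  rw [hsol t ht, hκ]
  field_simp
  ring

theorem stmt_14 (r b κ : ℝ) (hr : 0 < r) (hb : 0 < b) (hκ : 1 ≤ κ)
    (p p' : ℝ → ℝ)
    (hderiv : ∀ t ∈ Set.Icc (0 : ℝ) (b / r), HasDerivAt p (p' t) t)
    (hode : ∀ t ∈ Set.Icc (0 : ℝ) (b / r), r * κ = r * p t - b * p' t)
    (h0 : p 0 = 1) (h1 : p (b / r) = 0) :
    κ = exp 1 / (exp 1 - 1) ∧
    ∀ t ∈ Set.Icc (0 : ℝ) (b / r),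
      p t = (exp 1 - exp ((r / b) * t)) / (exp 1 - 1) :=
  stmt_14_general r b κ hr hb p p' hderiv hode h0 h1
end
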